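/- The tensor product of two almost ι-complexes is an almost ι-complex: if (C1, ῑ1) and (C2, ῑ2) are almost ι-complexes, then (C1 ⊗_{F[U]} C2, ῑ1 ⊗ ῑ2) satisfies (ῑ1⊗ῑ2)∂ + ∂(ῑ1⊗ῑ2) ∈ im U, (ῑ1⊗ῑ2)² ≃ id mod U, and U⁻¹H_*(C1⊗C2) ≅ F[U,U⁻¹]. -/

import Mathlib

open Polynomial

abbrev F2 : Type := ZMod 2
abbrev R : Type := Polynomial F2

noncomputable section

namespace AI

/-- The variable `U`. -/
def Uu : R := Polynomial.X

/-- The free `R`-module of rank `n`. -/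
abbrev V (n : ℕ) : Type := Fin n → R

/-- The `i`-th standard basis vector. -/
def e {n : ℕ} (i : Fin n) : V n := fun j => if j = i then 1 else 0

/-- The `i`-th standard basis vector over `F2`. -/
def e2 {n : ℕ} (i : Fin n) : Fin n → F2 := fun j => if j = i then 1 else 0

/-- `x` lies in the image of multiplication by `U`. -/
def modU {n : ℕ} (x : V n) : Prop := ∀ j, (x j).coeff 0 = 0

/-- `x` is homogeneous of degree `c` with respect to the generator gradings `gr`
(where `deg U = -2`). -/
def IsHomog {n : ℕ} (gr : Fin n → ℤ) (c : ℤ) (x : V n) : Prop :=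
  ∀ (j : Fin n) (m : ℕ), (x j).coeff m ≠ 0 → gr j - 2 * (m : ℤ) = c

/-- `f` is a graded `R`-linear map of degree `dg`. -/
def GradedMap {m n : ℕ} (gr₁ : Fin m → ℤ) (gr₂ : Fin n → ℤ) (dg : ℤ)
    (f : V m →ₗ[R] V n) : Prop :=
  ∀ i : Fin m, IsHomog gr₂ (gr₁ i + dg) (f (e i))

/-- The raw data of a free finitely generated `ℤ`-graded complex over `R = F[U]`. -/
structure PreCplx where
  n : ℕ
  gr : Fin n → ℤ
  d : V n →ₗ[R] V n

def IsCycle (C : PreCplx) (x : V C.n) : Prop := C.d x = 0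

def IsBdry (C : PreCplx) (x : V C.n) : Prop := ∃ y, C.d y = x

/-- `x` is a cycle representing a `U`-nontorsion homology class. -/
def NontorsionClass (C : PreCplx) (x : V C.n) : Prop :=
  IsCycle C x ∧ ∀ k : ℕ, ¬ IsBdry C ((Uu ^ k) • x)

/-- `U⁻¹H_*(C) ≅ F[U, U⁻¹]`, generated by a degree-zero cycle (normalization
convention: the maximal degree of a `U`-nontorsion cycle class is zero, so the
localized homology is supported in even degrees). -/
def HtowerCond (C : PreCplx) : Prop :=
  ∃ x : V C.n, IsCycle C x ∧ IsHomog C.gr 0 x ∧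
    (∀ k : ℕ, ¬ IsBdry C ((Uu ^ k) • x)) ∧
    (∀ y : V C.n, IsCycle C y →
      ∃ (k : ℕ) (p : R) (z : V C.n), (Uu ^ k) • y = p • x + C.d z)

/-- `C` is a genuine graded chain complex. -/
def IsCplx (C : PreCplx) : Prop :=
  GradedMap C.gr C.gr (-1) C.d ∧ C.d ∘ₗ C.d = 0

/-- `f` and `g` are homotopic mod `U`. -/
def HomotopicModU (C₁ C₂ : PreCplx) (f g : V C₁.n →ₗ[R] V C₂.n) : Prop :=
  ∃ H : V C₁.n →ₗ[R] V C₂.n, GradedMap C₁.gr C₂.gr 1 H ∧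
    ∀ x, modU ((f + g + H ∘ₗ C₁.d + C₂.d ∘ₗ H) x)

/-- The raw data of an almost ι-complex. -/
structure PreAI extends PreCplx where
  ι : V n →ₗ[R] V n

/-- `ω = 1 + ι`. -/
def omega (C : PreAI) : V C.n →ₗ[R] V C.n := LinearMap.id + C.ι

/-- `C` is an almost ι-complex. -/
def IsAICplx (C : PreAI) : Prop :=
  IsCplx C.toPreCplx ∧
  GradedMap C.gr C.gr 0 C.ι ∧
  (∀ x, modU ((C.ι ∘ₗ C.d + C.d ∘ₗ C.ι) x)) ∧
  HomotopicModU C.toPreCplx C.toPreCplx (C.ι ∘ₗ C.ι) LinearMap.id ∧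
  HtowerCond C.toPreCplx

/-- `C` is a genuine ι-complex: `ι` is an honest chain map whose square is
genuinely chain homotopic to the identity. -/
def IsIotaCplx (C : PreAI) : Prop :=
  IsCplx C.toPreCplx ∧
  GradedMap C.gr C.gr 0 C.ι ∧
  C.ι ∘ₗ C.d = C.d ∘ₗ C.ι ∧
  (∃ H : V C.n →ₗ[R] V C.n, GradedMap C.gr C.gr 1 H ∧
    C.ι ∘ₗ C.ι + LinearMap.id = H ∘ₗ C.d + C.d ∘ₗ H) ∧
  HtowerCond C.toPreCplx

/-- A reduced complex: the differential vanishes mod `U`. -/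
def Reduced (C : PreAI) : Prop := ∀ x, modU (C.d x)

/-- `f` is an almost ι-morphism. -/
def isAIMorphism (C₁ C₂ : PreAI) (f : V C₁.n →ₗ[R] V C₂.n) : Prop :=
  GradedMap C₁.gr C₂.gr 0 f ∧
  f ∘ₗ C₁.d = C₂.d ∘ₗ f ∧
  HomotopicModU C₁.toPreCplx C₂.toPreCplx (f ∘ₗ C₁.ι) (C₂.ι ∘ₗ f)

/-- A local map: an almost ι-morphism inducing an isomorphism on `U`-localized
homology (equivalently, with the normalization conventions in force, preserving
`U`-nontorsion cycle classes). -/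
def isLocalMap (C₁ C₂ : PreAI) (f : V C₁.n →ₗ[R] V C₂.n) : Prop :=
  isAIMorphism C₁ C₂ f ∧
  ∀ x, NontorsionClass C₁.toPreCplx x → NontorsionClass C₂.toPreCplx (f x)

/-- Local equivalence of almost ι-complexes. -/
def LocallyEquiv (C₁ C₂ : PreAI) : Prop :=
  (∃ f, isLocalMap C₁ C₂ f) ∧ (∃ g, isLocalMap C₂ C₁ g)

/-- The tensor product (over `R`) of linear maps between free modules,
in the bases indexed by `finProdFinEquiv`. -/
def tmap {m n m' n' : ℕ} (f : V m →ₗ[R] V m') (g : V n →ₗ[R] V n') :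
    V (m * n) →ₗ[R] V (m' * n') where
  toFun x := fun p => ∑ q : Fin (m * n),
    x q * f (e (finProdFinEquiv.symm q).1) (finProdFinEquiv.symm p).1
        * g (e (finProdFinEquiv.symm q).2) (finProdFinEquiv.symm p).2
  map_add' x y := by
    funext p
    simp [Pi.add_apply, add_mul, Finset.sum_add_distrib]
  map_smul' c x := by
    funext p
    simp only [RingHom.id_apply, Pi.smul_apply, smul_eq_mul, Finset.mul_sum]
    exact Finset.sum_congr rfl fun q _ => by ring

/-- The tensor product of complexes. -/
def tensorPre (C₁ C₂ : PreCplx) : PreCplx where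
  n := C₁.n * C₂.n
  gr := fun q => C₁.gr (finProdFinEquiv.symm q).1 + C₂.gr (finProdFinEquiv.symm q).2
  d := tmap C₁.d LinearMap.id + tmap LinearMap.id C₂.d

/-- The tensor product of almost ι-complexes. -/
def tensorAI (C₁ C₂ : PreAI) : PreAI where
  toPreCplx := tensorPre C₁.toPreCplx C₂.toPreCplx
  ι := tmap C₁.ι C₂.ι

/-- The transpose of a square matrix map (the dual map in the dual basis). -/
def tr {n : ℕ} (f : V n →ₗ[R] V n) : V n →ₗ[R] V n where
  toFun x := fun j => ∑ i : Fin n, x i * f (e j) i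
  map_add' x y := by
    funext j
    simp [Pi.add_apply, add_mul, Finset.sum_add_distrib]
  map_smul' c x := by
    funext j
    simp only [RingHom.id_apply, Pi.smul_apply, smul_eq_mul, Finset.mul_sum]
    exact Finset.sum_congr rfl fun i _ => by ring

/-- The dual complex. -/
def dualPre (C : PreCplx) : PreCplx where
  n := C.n
  gr := fun i => -C.gr i
  d := tr C.d

/-- The dual almost ι-complex. -/
def dualAI (C : PreAI) : PreAI where
  toPreCplx := dualPre C.toPreCplx
  ι := tr C.ι

/-- The trivial complex `C(0) = (F[U], ∂ = 0, ι = id)`. -/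
def cZero : PreAI := ⟨⟨1, fun _ => 0, 0⟩, LinearMap.id⟩

/-- The contraction map `C ⊗ C^∨ → F[U]`, `x ⊗ y ↦ y(x)`. -/
def contr (n : ℕ) : V (n * n) →ₗ[R] V 1 where
  toFun x := fun _ => ∑ i : Fin n, x (finProdFinEquiv (i, i))
  map_add' x y := by funext j; simp [Pi.add_apply, Finset.sum_add_distrib]
  map_smul' c x := by
    funext j
    simp only [RingHom.id_apply, Pi.smul_apply, smul_eq_mul, Finset.mul_sum]

/-! ### Standard and augmented complexes -/

/-- The `i`-th symbol (0-indexed) of the parameter sequence, padded by zeros. -/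
def seqAt (M : List ℤ) (i : ℕ) : ℤ := M.getD i 0

/-- Grading step of a `b`-arrow. -/
def bstep (b : ℤ) : ℤ := (if 0 < b then 1 else -1) - 2 * b

/-- Grading of the generator `T_i` of the standard/augmented complex. -/
def stdGr (M : List ℤ) (i : ℕ) : ℤ :=
  ∑ s ∈ Finset.range i, if s % 2 = 1 then bstep (seqAt M s) else 0

/-- A linear endomorphism of `V n` given by a matrix of coefficients. -/
def ofMatrix {n : ℕ} (c : ℕ → ℕ → R) : V n →ₗ[R] V n where
  toFun x := fun j => ∑ i : Fin n, x i * c i j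
  map_add' x y := by
    funext j
    simp [Pi.add_apply, add_mul, Finset.sum_add_distrib]
  map_smul' r x := by
    funext j
    simp only [RingHom.id_apply, Pi.smul_apply, smul_eq_mul, Finset.mul_sum]
    exact Finset.sum_congr rfl fun i _ => by ring

/-- Matrix of the differential of the standard/augmented complex: the `b`-symbol
at (0-indexed) odd position `s` of `M` relates `T_s` and `T_{s+1}`. -/
def dCoef (M : List ℤ) (i j : ℕ) : R :=
  if i % 2 = 1 ∧ seqAt M i < 0 ∧ j = i + 1 then Uu ^ (seqAt M i).natAbs
  else if i % 2 = 0 ∧ 0 < i ∧ 0 < seqAt M (i - 1) ∧ j + 1 = i then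
    Uu ^ (seqAt M (i - 1)).natAbs
  else 0

/-- Matrix of `ω = 1 + ι` on the standard/augmented complex: the `a`-symbol at
(0-indexed) even position `s` of `M` relates `T_s` and `T_{s+1}`. -/
def wCoef (M : List ℤ) (i j : ℕ) : R :=
  if i % 2 = 0 ∧ seqAt M i = -1 ∧ j = i + 1 then 1
  else if i % 2 = 1 ∧ seqAt M (i - 1) = 1 ∧ j + 1 = i then 1
  else 0

/-- Matrix of `ι = 1 + ω` (char 2). -/
def iCoef (M : List ℤ) (i j : ℕ) : R :=
  (if i = j then 1 else 0) + wCoef M i j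

/-- The standard (even length) or augmented (odd length) complex on generators
`T_0, …, T_{M.length}` determined by the symbol sequence `M`. -/
def symCplx (M : List ℤ) : PreAI :=
  ⟨⟨M.length + 1, fun i => stdGr M i, ofMatrix (dCoef M)⟩, ofMatrix (iCoef M)⟩

/-- Validity of a standard parameter sequence. -/
def StdParams (M : List ℤ) : Prop :=
  M.length % 2 = 0 ∧
  ∀ i < M.length, if i % 2 = 0 then seqAt M i = 1 ∨ seqAt M i = -1 else seqAt M i ≠ 0

/-- Validity of an augmented parameter sequence. -/
def AugParams (M : List ℤ) : Prop :=
  M.length % 2 = 1 ∧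
  ∀ i < M.length, if i % 2 = 0 then seqAt M i = 1 ∨ seqAt M i = -1 else seqAt M i ≠ 0

/-- The modified order `<!` on `ℤ`: `−1 <! −2 <! ⋯ <! 0 <! ⋯ <! 2 <! 1`. -/
def ltB (x y : ℤ) : Prop :=
  (x < 0 ∧ 0 ≤ y) ∨ (x ≤ 0 ∧ 0 < y) ∨ (x < 0 ∧ y < 0 ∧ y < x) ∨ (0 < x ∧ 0 < y ∧ y < x)

def leB (x y : ℤ) : Prop := ltB x y ∨ x = y

/-- Strict lexicographic order on (zero-padded) parameter sequences. -/
def lexLt (M M' : List ℤ) : Prop :=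
  ∃ k : ℕ, (∀ i < k, seqAt M i = seqAt M' i) ∧ ltB (seqAt M k) (seqAt M' k)

def lexLe (M M' : List ℤ) : Prop := lexLt M M' ∨ ∀ i, seqAt M i = seqAt M' i

/-- A short map from the standard (even `M.length`) or augmented (odd `M.length`)
complex determined by `M` to `A`: the `ω`-condition (standard case) resp. the
`∂`-condition (augmented case) is waived on the final generator. -/
def isShortMap (M : List ℤ) (A : PreAI) (f : V (M.length + 1) →ₗ[R] V A.n) : Prop :=
  GradedMap (symCplx M).gr A.gr 0 f ∧
  (∀ i : Fin (M.length + 1), ((i : ℕ) < M.length ∨ M.length % 2 = 0) →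
    A.d (f (e i)) = f ((symCplx M).d (e i))) ∧
  (∀ i : Fin (M.length + 1), ((i : ℕ) < M.length ∨ M.length % 2 = 1) →
    modU ((omega A) (f (e i)) + f ((omega (symCplx M)) (e i))))

/-- A local short map: `T_0` goes to a `U`-nontorsion cycle class. -/
def isLocalShortMap (M : List ℤ) (A : PreAI) (f : V (M.length + 1) →ₗ[R] V A.n) : Prop :=
  isShortMap M A f ∧ NontorsionClass A.toPreCplx (f (e ⟨0, Nat.succ_pos _⟩))

/-- The sequence of invariants `s_i(A)` (1-indexed in the paper; 0-indexed here):
`s k` is the `≤!`-maximum of the `(k+1)`-st symbols among standard complexes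
locally mapping to `A` whose first `k` symbols are `s 0, …, s (k-1)`. -/
def IsInvariantSeq (A : PreAI) (s : ℕ → ℤ) : Prop :=
  ∀ k : ℕ,
    (∃ M : List ℤ, StdParams M ∧ (∃ f, isLocalMap (symCplx M) A f) ∧
      ∀ i ≤ k, seqAt M i = s i) ∧
    (∀ M : List ℤ, StdParams M → (∃ f, isLocalMap (symCplx M) A f) →
      (∀ i < k, seqAt M i = s i) → leB (seqAt M k) (s k))

/-- Reduction mod `U` of a linear map, as an `F₂`-linear map. -/
def mapHat {m n : ℕ} (f : V m →ₗ[R] V n) : (Fin m → F2) →ₗ[F2] (Fin n → F2) where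
  toFun x := fun j => ∑ i : Fin m, x i * (f (e i) j).coeff 0
  map_add' x y := by
    funext j
    simp [Pi.add_apply, add_mul, Finset.sum_add_distrib]
  map_smul' c x := by
    funext j
    simp only [RingHom.id_apply, Pi.smul_apply, smul_eq_mul, Finset.mul_sum]
    exact Finset.sum_congr rfl fun i _ => by ring

/-- The induced action `ω̂` on `C/U`. -/
def wHat (C : PreAI) : (Fin C.n → F2) →ₗ[F2] (Fin C.n → F2) := mapHat (omega C)

end AI

/-!
The relations for `ι₁ ⊗ ι₂` are checked on pure tensors: with the unsigned differential
`∂₁ ⊗ 1 + 1 ⊗ ∂₂` the cross terms cancel in characteristic 2, and `H₁ ⊗ ι₂² + 1 ⊗ H₂` is a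
homotopy from `(ι₁ ⊗ ι₂)²` to the identity mod `U`.

For the tower, every `Cᵢ` deformation retracts, up to a power of `U`, onto the tower generated
by its degree-zero cycle `xᵢ`. That is, there are a chain map `Pᵢ : Cᵢ → F[U]` with
`Pᵢ xᵢ = U^{Mᵢ}` and a homotopy `hᵢ` with `∂hᵢ + hᵢ∂ = U^{Mᵢ} - xᵢ Pᵢ`. To build `Pᵢ`, reduce a
chain modulo `im ∂` to a cycle, using a section of `∂` over its image (free, since `F[U]` is a
PID). Noetherianity makes `U^{Mᵢ}` times that cycle a multiple of `xᵢ` modulo boundaries, with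
a single `Mᵢ` for all cycles. The multiple is unique because, by the grading, no nonzero
multiple of `xᵢ` is a boundary. Such retractions tensor together, and `P₁ ⊗ P₂` rules out
`U^k (x₁ ⊗ x₂)` being a boundary.
-/

namespace AI

lemma sum_smul_e {n : ℕ} (v : V n) : ∑ i, v i • e i = v := by
  funext j
  simp [e, Finset.sum_apply]

lemma apply_eq_sum {m n : ℕ} (f : V m →ₗ[R] V n) (v : V m) (j : Fin n) :
    f v j = ∑ i, v i * f (e i) j := by
  conv_lhs => rw [← sum_smul_e v]
  simp [Finset.sum_apply]

lemma linearMap_add_self {M : Type*} [AddCommMonoid M] [Module R M] {k : ℕ}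
    (f : M →ₗ[R] V k) : f + f = 0 :=
  LinearMap.ext fun x => funext fun j => CharTwo.add_self_eq_zero (f x j)

lemma e_eq_single {n : ℕ} (i : Fin n) : e i = Pi.single i 1 := by
  funext j
  simp [e, Pi.single_apply]

lemma linearMap_ext_e {n : ℕ} {M : Type*} [AddCommMonoid M] [Module R M]
    {f g : V n →ₗ[R] M} (h : ∀ i, f (e i) = g (e i)) : f = g :=
  (Pi.basisFun R (Fin n)).ext fun i => by simpa [e_eq_single] using h i

def tvec {m n : ℕ} (u : V m) (v : V n) : V (m * n) :=
  fun p => u (finProdFinEquiv.symm p).1 * v (finProdFinEquiv.symm p).2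

section Tensor

variable {m n m' n' k l : ℕ}

lemma tvec_add_left (u u' : V m) (v : V n) : tvec (u + u') v = tvec u v + tvec u' v := by
  funext p; simp [tvec, add_mul]

lemma tvec_add_right (u : V m) (v v' : V n) : tvec u (v + v') = tvec u v + tvec u v' := by
  funext p; simp [tvec, mul_add]

lemma tvec_sub_left (u u' : V m) (v : V n) : tvec (u - u') v = tvec u v - tvec u' v := by
  funext p; simp [tvec, sub_mul]

lemma tvec_sub_right (u : V m) (v v' : V n) : tvec u (v - v') = tvec u v - tvec u v' := by
  funext p; simp [tvec, mul_sub]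

lemma tvec_smul_left (r : R) (u : V m) (v : V n) : tvec (r • u) v = r • tvec u v := by
  funext p; simp [tvec, mul_assoc]

lemma tvec_smul_right (r : R) (u : V m) (v : V n) : tvec u (r • v) = r • tvec u v := by
  funext p; simp [tvec, mul_left_comm]

@[simp] lemma tvec_zero_left (v : V n) : tvec (0 : V m) v = 0 := by
  funext p; simp [tvec]

@[simp] lemma tvec_zero_right (u : V m) : tvec u (0 : V n) = 0 := by
  funext p; simp [tvec]

lemma tvec_e_e (i : Fin m) (j : Fin n) : tvec (e i) (e j) = e (finProdFinEquiv (i, j)) := by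
  funext p
  obtain ⟨⟨a, b⟩, rfl⟩ := finProdFinEquiv.surjective p
  simp only [tvec, e, Equiv.symm_apply_apply, EmbeddingLike.apply_eq_iff_eq, Prod.ext_iff]
  split_ifs <;> simp_all

lemma tvec_e_e_symm (q : Fin (m * n)) :
    tvec (e (finProdFinEquiv.symm q).1) (e (finProdFinEquiv.symm q).2) = e q := by
  rw [tvec_e_e, Prod.mk.eta, Equiv.apply_symm_apply]

lemma linearMap_ext_tvec {M : Type*} [AddCommMonoid M] [Module R M]
    {f g : V (m * n) →ₗ[R] M} (h : ∀ i j, f (tvec (e i) (e j)) = g (tvec (e i) (e j))) :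
    f = g :=
  linearMap_ext_e fun q => by
    simpa only [tvec_e_e_symm] using h (finProdFinEquiv.symm q).1 (finProdFinEquiv.symm q).2

lemma tmap_tvec (f : V m →ₗ[R] V m') (g : V n →ₗ[R] V n') (u : V m) (v : V n) :
    tmap f g (tvec u v) = tvec (f u) (g v) := by
  funext p
  simp only [tmap, LinearMap.coe_mk, AddHom.coe_mk, tvec, apply_eq_sum f u, apply_eq_sum g v,
    Finset.sum_mul_sum]
  rw [← finProdFinEquiv.sum_comp, Fintype.sum_prod_type]
  simp only [Equiv.symm_apply_apply]
  exact Finset.sum_congr rfl fun i _ => Finset.sum_congr rfl fun j _ => by ring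

lemma tmap_comp_tmap (f : V m' →ₗ[R] V k) (g : V n' →ₗ[R] V l) (f' : V m →ₗ[R] V m')
    (g' : V n →ₗ[R] V n') : tmap f g ∘ₗ tmap f' g' = tmap (f ∘ₗ f') (g ∘ₗ g') :=
  linearMap_ext_tvec fun _ _ => by simp [tmap_tvec]

lemma tmap_add_left (f f' : V m →ₗ[R] V m') (g : V n →ₗ[R] V n') :
    tmap (f + f') g = tmap f g + tmap f' g :=
  linearMap_ext_tvec fun _ _ => by simp [tmap_tvec, tvec_add_left]

lemma tmap_add_right (f : V m →ₗ[R] V m') (g g' : V n →ₗ[R] V n') :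
    tmap f (g + g') = tmap f g + tmap f g' :=
  linearMap_ext_tvec fun _ _ => by simp [tmap_tvec, tvec_add_right]

lemma tmap_zero_left (g : V n →ₗ[R] V n') : tmap (0 : V m →ₗ[R] V m') g = 0 :=
  linearMap_ext_tvec fun _ _ => by simp [tmap_tvec]

lemma tmap_zero_right (f : V m →ₗ[R] V m') : tmap f (0 : V n →ₗ[R] V n') = 0 :=
  linearMap_ext_tvec fun _ _ => by simp [tmap_tvec]

lemma tmap_id : tmap (LinearMap.id : V m →ₗ[R] V m) (LinearMap.id : V n →ₗ[R] V n) =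
    LinearMap.id :=
  linearMap_ext_tvec fun _ _ => by simp [tmap_tvec]

def tfun (P₁ : V m →ₗ[R] R) (P₂ : V n →ₗ[R] R) : V (m * n) →ₗ[R] R where
  toFun z := ∑ q, z q * (P₁ (e (finProdFinEquiv.symm q).1) * P₂ (e (finProdFinEquiv.symm q).2))
  map_add' y z := by simp [add_mul, Finset.sum_add_distrib]
  map_smul' r z := by simp [Finset.mul_sum, mul_assoc]

lemma tfun_tvec (P₁ : V m →ₗ[R] R) (P₂ : V n →ₗ[R] R) (u : V m) (v : V n) :
    tfun P₁ P₂ (tvec u v) = P₁ u * P₂ v := by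
  conv_rhs => rw [← sum_smul_e u, ← sum_smul_e v]
  simp only [tfun, LinearMap.coe_mk, AddHom.coe_mk, tvec, map_sum, map_smul, smul_eq_mul,
    Finset.sum_mul_sum]
  rw [← finProdFinEquiv.sum_comp, Fintype.sum_prod_type]
  simp only [Equiv.symm_apply_apply]
  exact Finset.sum_congr rfl fun i _ => Finset.sum_congr rfl fun j _ => by ring

end Tensor

section TensorDifferential

variable {m n : ℕ}

def dTensor (d₁ : V m →ₗ[R] V m) (d₂ : V n →ₗ[R] V n) : V (m * n) →ₗ[R] V (m * n) :=
  tmap d₁ LinearMap.id + tmap LinearMap.id d₂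

lemma dTensor_tvec (d₁ : V m →ₗ[R] V m) (d₂ : V n →ₗ[R] V n) (u : V m) (v : V n) :
    dTensor d₁ d₂ (tvec u v) = tvec (d₁ u) v + tvec u (d₂ v) := by
  simp [dTensor, tmap_tvec]

lemma dTensor_comp_self {d₁ : V m →ₗ[R] V m} {d₂ : V n →ₗ[R] V n} (h₁ : d₁ ∘ₗ d₁ = 0)
    (h₂ : d₂ ∘ₗ d₂ = 0) : dTensor d₁ d₂ ∘ₗ dTensor d₁ d₂ = 0 := by
  simp only [dTensor, LinearMap.comp_add, LinearMap.add_comp, tmap_comp_tmap,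
    LinearMap.id_comp, LinearMap.comp_id, h₁, h₂, tmap_zero_left, tmap_zero_right]
  abel_nf
  simp only [two_zsmul, linearMap_add_self]

lemma dTensor_anticomm (d₁ ι₁ : V m →ₗ[R] V m) (d₂ ι₂ : V n →ₗ[R] V n) :
    tmap ι₁ ι₂ ∘ₗ dTensor d₁ d₂ + dTensor d₁ d₂ ∘ₗ tmap ι₁ ι₂ =
      tmap (ι₁ ∘ₗ d₁ + d₁ ∘ₗ ι₁) ι₂ + tmap ι₁ (ι₂ ∘ₗ d₂ + d₂ ∘ₗ ι₂) := by
  simp only [dTensor, LinearMap.comp_add, LinearMap.add_comp, tmap_comp_tmap,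
    LinearMap.id_comp, LinearMap.comp_id, tmap_add_left, tmap_add_right]
  abel

lemma tmap_sq_add_id_add_dTensor_comm (d₁ ι₁ H₁ : V m →ₗ[R] V m) (d₂ ι₂ H₂ : V n →ₗ[R] V n) :
    tmap ι₁ ι₂ ∘ₗ tmap ι₁ ι₂ + LinearMap.id +
        (tmap H₁ (ι₂ ∘ₗ ι₂) + tmap LinearMap.id H₂) ∘ₗ dTensor d₁ d₂ +
        dTensor d₁ d₂ ∘ₗ (tmap H₁ (ι₂ ∘ₗ ι₂) + tmap LinearMap.id H₂) =
      tmap (ι₁ ∘ₗ ι₁ + LinearMap.id + H₁ ∘ₗ d₁ + d₁ ∘ₗ H₁) (ι₂ ∘ₗ ι₂) +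
      tmap LinearMap.id (ι₂ ∘ₗ ι₂ + LinearMap.id + H₂ ∘ₗ d₂ + d₂ ∘ₗ H₂) +
      tmap H₁ (ι₂ ∘ₗ ι₂ ∘ₗ d₂ + d₂ ∘ₗ ι₂ ∘ₗ ι₂) := by
  simp only [dTensor, LinearMap.comp_add, LinearMap.add_comp, tmap_comp_tmap,
    LinearMap.id_comp, LinearMap.comp_id, tmap_add_left, tmap_add_right, tmap_id,
    LinearMap.comp_assoc]
  abel_nf
  simp only [two_zsmul, linearMap_add_self, zero_add, add_zero]

end TensorDifferential

section ModU

variable {m n m' n' : ℕ}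

def modUSubmodule (n : ℕ) : Submodule R (V n) where
  carrier := {v | modU v}
  add_mem' hu hv j := by simp [hu j, hv j]
  zero_mem' j := by simp
  smul_mem' r v hv j := by simp [mul_coeff_zero, hv j]

lemma modU_map (f : V m →ₗ[R] V n) {v : V m} (hv : modU v) : modU (f v) := by
  have hv' : v = Uu • fun j => (v j).divX := by
    funext j
    simpa [Uu, hv j, mul_comm] using (divX_mul_X_add (v j)).symm
  rw [hv', map_smul]
  intro j
  simp [Uu, mul_coeff_zero]

lemma modU_tvec_left {u : V m} (hu : modU u) (v : V n) : modU (tvec u v) := fun p => by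
  simp [tvec, mul_coeff_zero, hu _]

lemma modU_tvec_right (u : V m) {v : V n} (hv : modU v) : modU (tvec u v) := fun p => by
  simp [tvec, mul_coeff_zero, hv _]

lemma modU_apply_of_modU_e {f : V m →ₗ[R] V n} (h : ∀ i, modU (f (e i))) (v : V m) :
    modU (f v) := by
  rw [← sum_smul_e v, map_sum]
  exact Submodule.sum_mem (modUSubmodule n) fun i _ => by
    rw [map_smul]; exact Submodule.smul_mem _ _ (h i)

lemma modU_add_apply {M : Type*} [AddCommMonoid M] [Module R M] {f g : M →ₗ[R] V n}
    (hf : ∀ v, modU (f v)) (hg : ∀ v, modU (g v)) (v : M) : modU ((f + g) v) :=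
  (modUSubmodule n).add_mem (hf v) (hg v)

lemma modU_tmap_apply_left {f : V m →ₗ[R] V m'} (hf : ∀ v, modU (f v)) (g : V n →ₗ[R] V n')
    (z : V (m * n)) : modU (tmap f g z) :=
  modU_apply_of_modU_e (fun q => by
    rw [← tvec_e_e_symm, tmap_tvec]; exact modU_tvec_left (hf _) _) z

lemma modU_tmap_apply_right (f : V m →ₗ[R] V m') {g : V n →ₗ[R] V n'} (hg : ∀ v, modU (g v))
    (z : V (m * n)) : modU (tmap f g z) :=
  modU_apply_of_modU_e (fun q => by
    rw [← tvec_e_e_symm, tmap_tvec]; exact modU_tvec_right _ (hg _)) z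

end ModU

section Grading

variable {m n m' n' : ℕ}

lemma exists_coeff_ne_zero_of_coeff_mul_ne_zero {p q : R} {k : ℕ} (h : (p * q).coeff k ≠ 0) :
    ∃ a b, a + b = k ∧ p.coeff a ≠ 0 ∧ q.coeff b ≠ 0 := by
  rw [coeff_mul] at h
  obtain ⟨⟨a, b⟩, hab, hne⟩ := Finset.exists_ne_zero_of_sum_ne_zero h
  exact ⟨a, b, Finset.HasAntidiagonal.mem_antidiagonal.mp hab, left_ne_zero_of_mul hne,
    right_ne_zero_of_mul hne⟩

lemma IsHomog.add {gr : Fin n → ℤ} {c : ℤ} {u v : V n} (hu : IsHomog gr c u)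
    (hv : IsHomog gr c v) : IsHomog gr c (u + v) := by
  intro j k hk
  by_cases h : (u j).coeff k = 0
  · exact hv j k (by simpa [h] using hk)
  · exact hu j k h

lemma isHomog_e (gr : Fin n → ℤ) (i : Fin n) : IsHomog gr (gr i) (e i) := by
  intro j k hk
  by_cases h : j = i
  · subst h
    have : k = 0 := by by_contra hk0; simp [e, coeff_one, hk0] at hk
    simp [this]
  · simp [e, h] at hk

def tensorGr (gr₁ : Fin m → ℤ) (gr₂ : Fin n → ℤ) : Fin (m * n) → ℤ :=
  fun q => gr₁ (finProdFinEquiv.symm q).1 + gr₂ (finProdFinEquiv.symm q).2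

lemma IsHomog.tvec {gr₁ : Fin m → ℤ} {gr₂ : Fin n → ℤ} {c₁ c₂ c : ℤ} {u : V m} {v : V n}
    (hu : IsHomog gr₁ c₁ u) (hv : IsHomog gr₂ c₂ v) (hc : c₁ + c₂ = c) :
    IsHomog (tensorGr gr₁ gr₂) c (tvec u v) := by
  intro q k hk
  obtain ⟨a, b, rfl, ha, hb⟩ := exists_coeff_ne_zero_of_coeff_mul_ne_zero hk
  have := hu _ a ha
  have := hv _ b hb
  simp only [tensorGr]
  omega

lemma IsHomog.map {gr₁ : Fin m → ℤ} {gr₂ : Fin n → ℤ} {dg c : ℤ} {f : V m →ₗ[R] V n}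
    (hf : GradedMap gr₁ gr₂ dg f) {u : V m} (hu : IsHomog gr₁ c u) :
    IsHomog gr₂ (c + dg) (f u) := by
  intro j k hk
  rw [apply_eq_sum f u j, finsetSum_coeff] at hk
  obtain ⟨i, -, hne⟩ := Finset.exists_ne_zero_of_sum_ne_zero hk
  obtain ⟨a, b, rfl, ha, hb⟩ := exists_coeff_ne_zero_of_coeff_mul_ne_zero hne
  have := hu i a ha
  have := hf i j b hb
  omega

lemma GradedMap.add {gr₁ : Fin m → ℤ} {gr₂ : Fin n → ℤ} {dg : ℤ} {f g : V m →ₗ[R] V n}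
    (hf : GradedMap gr₁ gr₂ dg f) (hg : GradedMap gr₁ gr₂ dg g) :
    GradedMap gr₁ gr₂ dg (f + g) := fun i => (hf i).add (hg i)

lemma GradedMap.comp {gr₁ : Fin m → ℤ} {gr₂ : Fin n → ℤ} {gr₃ : Fin m' → ℤ} {dg₁ dg₂ : ℤ}
    {f : V m →ₗ[R] V n} {g : V n →ₗ[R] V m'} (hg : GradedMap gr₂ gr₃ dg₂ g)
    (hf : GradedMap gr₁ gr₂ dg₁ f) : GradedMap gr₁ gr₃ (dg₁ + dg₂) (g ∘ₗ f) := fun i => by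
  simpa [add_assoc] using (hf i).map hg

lemma gradedMap_id (gr : Fin n → ℤ) : GradedMap gr gr 0 (LinearMap.id : V n →ₗ[R] V n) :=
  fun i => by simpa using isHomog_e gr i

lemma GradedMap.tmap {gr₁ : Fin m → ℤ} {gr₂ : Fin n → ℤ} {gr₁' : Fin m' → ℤ}
    {gr₂' : Fin n' → ℤ} {dg₁ dg₂ dg : ℤ} {f : V m →ₗ[R] V m'} {g : V n →ₗ[R] V n'}
    (hf : GradedMap gr₁ gr₁' dg₁ f) (hg : GradedMap gr₂ gr₂' dg₂ g) (hdg : dg₁ + dg₂ = dg) :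
    GradedMap (tensorGr gr₁ gr₂) (tensorGr gr₁' gr₂') dg (AI.tmap f g) := fun q => by
  rw [← tvec_e_e_symm, tmap_tvec]
  exact (hf _).tvec (hg _) (by simp only [tensorGr]; omega)

end Grading

section HomogeneousParts

variable {m n : ℕ}

/-- The monomials `U^a` of `p` with `2a = k`: those lowering the grading by `k`. -/
def degPart (k : ℤ) (p : R) : R :=
  ∑ a ∈ p.support.filter (fun a : ℕ => 2 * (a : ℤ) = k), monomial a (p.coeff a)

lemma coeff_degPart (k : ℤ) (p : R) (a : ℕ) :
    (degPart k p).coeff a = if 2 * (a : ℤ) = k then p.coeff a else 0 := by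
  simp only [degPart, finsetSum_coeff, coeff_monomial, Finset.sum_ite_eq', Finset.mem_filter,
    mem_support_iff]
  by_cases h : p.coeff a = 0 <;> simp [h]

lemma degPart_add (k : ℤ) (p q : R) : degPart k (p + q) = degPart k p + degPart k q := by
  ext a
  simp only [coeff_add, coeff_degPart]
  split_ifs <;> simp

lemma degPart_two_mul (k : ℕ) (p : R) : degPart (2 * k) p = C (p.coeff k) * X ^ k := by
  ext a
  rw [coeff_degPart, coeff_C_mul_X_pow]
  by_cases h : a = k
  · simp [h]
  · rw [if_neg (by omega), if_neg h]

def homogPart (gr : Fin n → ℤ) (c : ℤ) : V n →+ V n where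
  toFun v j := degPart (gr j - c) (v j)
  map_zero' := by funext j; ext; simp [coeff_degPart]
  map_add' u v := by funext j; exact degPart_add _ _ _

lemma homogPart_smul {gr : Fin n → ℤ} {c c' : ℤ} {w : V n} (hw : IsHomog gr c' w) (p : R) :
    homogPart gr c (p • w) = degPart (c' - c) p • w := by
  funext j
  ext k
  simp only [homogPart, AddMonoidHom.coe_mk, ZeroHom.coe_mk, Pi.smul_apply, smul_eq_mul,
    coeff_degPart, coeff_mul]
  rw [Finset.ite_sum_zero]
  refine Finset.sum_congr rfl fun ab hab => ?_
  have hab := Finset.HasAntidiagonal.mem_antidiagonal.mp hab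
  by_cases hb : (w j).coeff ab.2 = 0
  · simp [hb]
  have := hw j ab.2 hb
  by_cases hk : 2 * (k : ℤ) = gr j - c
  · rw [if_pos hk, if_pos (by omega)]
  · rw [if_neg hk, if_neg (by omega), zero_mul]

lemma homogPart_map {gr₁ : Fin m → ℤ} {gr₂ : Fin n → ℤ} {dg : ℤ} {f : V m →ₗ[R] V n}
    (hf : GradedMap gr₁ gr₂ dg f) (c : ℤ) (v : V m) :
    homogPart gr₂ (c + dg) (f v) = f (homogPart gr₁ c v) := by
  conv_lhs => rw [← sum_smul_e v]
  conv_rhs => rw [← sum_smul_e v]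
  simp only [map_sum, map_smul, homogPart_smul (hf _), homogPart_smul (isHomog_e gr₁ _),
    add_sub_add_right_eq_sub]

end HomogeneousParts

lemma eq_zero_of_smul_mem_range {C : PreCplx} (hd : GradedMap C.gr C.gr (-1) C.d) {x : V C.n}
    (hx : IsHomog C.gr 0 x) (hnt : ∀ k : ℕ, ¬ IsBdry C ((Uu ^ k) • x)) {s : R}
    (hs : s • x ∈ LinearMap.range C.d) : s = 0 := by
  by_contra hs0
  obtain ⟨z, hz⟩ := hs
  set k := s.natDegree
  have hlead : s.coeff k = 1 := by
    have : s.coeff k ≠ 0 := mt leadingCoeff_eq_zero.mp hs0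
    revert this
    generalize s.coeff k = a
    decide +revert
  -- the part of degree `-2k` of `s • x` is `U^k • x`, and taking homogeneous parts commutes with `∂`
  apply hnt k ⟨homogPart C.gr (-(2 * k) + 1) z, ?_⟩
  rw [← homogPart_map hd, hz, homogPart_smul hx, show (-(2 * k) + 1 + -1 : ℤ) = -(2 * k) by ring,
    sub_neg_eq_add, zero_add, degPart_two_mul, hlead, map_one, one_mul, Uu]

lemma exists_pow_smul_mem_of_isNoetherian {A M : Type*} [CommRing A] [AddCommGroup M]
    [Module A M] [IsNoetherian A M] (N : Submodule A M) (a : A) (S : Set M)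
    (h : ∀ y ∈ S, ∃ k : ℕ, a ^ k • y ∈ N) : ∃ k : ℕ, ∀ y ∈ S, a ^ k • y ∈ N := by
  let chain : ℕ →o Submodule A M :=
    ⟨fun k => N.comap (a ^ k • LinearMap.id), monotone_nat_of_le_succ fun k y hy => by
      simpa [pow_succ', mul_smul] using N.smul_mem a hy⟩
  obtain ⟨k₀, hk₀⟩ := monotone_stabilizes_iff_noetherian.mpr ‹_› chain
  refine ⟨k₀, fun y hy => ?_⟩
  obtain ⟨k, hk⟩ := h y hy
  have : y ∈ chain (max k₀ k) := chain.monotone (le_max_right k₀ k) (by simpa [chain] using hk)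
  simpa [chain, ← hk₀ _ (le_max_left k₀ k)] using this

lemma exists_linearMap_sub_smul_mem {A M N : Type*} [CommRing A] [AddCommGroup M] [Module A M]
    [AddCommGroup N] [Module A N] (B : Submodule A M) {x : M}
    (hx : ∀ a : A, a • x ∈ B → a = 0) (L : N →ₗ[A] M) (hL : ∀ v, ∃ a : A, L v - a • x ∈ B) :
    ∃ P : N →ₗ[A] A, ∀ v, L v - P v • x ∈ B := by
  let φ : A →ₗ[A] M ⧸ B := B.mkQ ∘ₗ LinearMap.toSpanSingleton A M x
  have hφ : Function.Injective φ := by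
    rw [← LinearMap.ker_eq_bot, LinearMap.ker_eq_bot']
    intro a ha
    exact hx a ((Submodule.Quotient.mk_eq_zero B).mp ha)
  have hrange : ∀ v, B.mkQ (L v) ∈ LinearMap.range φ := fun v => by
    obtain ⟨a, ha⟩ := hL v
    exact ⟨a, ((Submodule.Quotient.eq B).mpr ha).symm⟩
  refine ⟨(LinearEquiv.ofInjective φ hφ).symm.toLinearMap ∘ₗ
    (B.mkQ ∘ₗ L).codRestrict (LinearMap.range φ) hrange, fun v => ?_⟩
  rw [← Submodule.Quotient.eq B]
  have hφP : φ ((LinearEquiv.ofInjective φ hφ).symm ⟨_, hrange v⟩) = B.mkQ (L v) := by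
    rw [← LinearEquiv.ofInjective_apply (h := hφ), LinearEquiv.apply_symm_apply]
  exact hφP.symm

lemma exists_section_range {A M N : Type*} [Ring A] [AddCommGroup M] [Module A M]
    [AddCommGroup N] [Module A N] (f : M →ₗ[A] N) [Module.Projective A (LinearMap.range f)] :
    ∃ σ : LinearMap.range f →ₗ[A] M, ∀ b, f (σ b) = b := by
  obtain ⟨σ, hσ⟩ := Module.projective_lifting_property f.rangeRestrict LinearMap.id
    f.surjective_rangeRestrict
  exact ⟨σ, fun b => congrArg Subtype.val (LinearMap.congr_fun hσ b)⟩

/-- Up to `U^M`, the complex deformation retracts onto the tower `F[U] • x`. -/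
structure IsTowerRetraction {n : ℕ} (d : V n →ₗ[R] V n) (x : V n) (P : V n →ₗ[R] R)
    (h : V n →ₗ[R] V n) (M : ℕ) : Prop where
  d_x : d x = 0
  P_d : ∀ v, P (d v) = 0
  P_x : P x = Uu ^ M
  homotopy : ∀ v, d (h v) + h (d v) = Uu ^ M • v - P v • x

lemma IsTowerRetraction.htowerCond {C : PreCplx} {x : V C.n} {P : V C.n →ₗ[R] R}
    {h : V C.n →ₗ[R] V C.n} {M : ℕ} (hr : IsTowerRetraction C.d x P h M)
    (hx : IsHomog C.gr 0 x) : HtowerCond C := by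
  refine ⟨x, hr.d_x, hx, fun k ⟨z, hz⟩ => ?_, fun y hy => ⟨M, P y, h y, ?_⟩⟩
  · have := hr.P_d z
    rw [hz, map_smul, hr.P_x, smul_eq_mul, ← pow_add, Uu] at this
    exact pow_ne_zero _ X_ne_zero this
  · have := hr.homotopy y
    rw [show C.d y = 0 from hy, map_zero, add_zero] at this
    rw [this, add_sub_cancel]

lemma exists_pow_smul_sub_smul_mem_range {n : ℕ} {d : V n →ₗ[R] V n} {x : V n}
    (hsp : ∀ y, d y = 0 → ∃ (k : ℕ) (p : R) (z : V n), Uu ^ k • y = p • x + d z) :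
    ∃ M : ℕ, ∀ y, d y = 0 → ∃ p : R, Uu ^ M • y - p • x ∈ LinearMap.range d := by
  obtain ⟨M, hM⟩ := exists_pow_smul_mem_of_isNoetherian ((R ∙ x) ⊔ LinearMap.range d) Uu
    (LinearMap.ker d) fun y hy => by
      obtain ⟨k, p, z, hk⟩ := hsp y hy
      exact ⟨k, hk ▸ Submodule.add_mem_sup (Submodule.smul_mem _ p
        (Submodule.mem_span_singleton_self x)) ⟨z, rfl⟩⟩
  refine ⟨M, fun y hy => ?_⟩
  obtain ⟨a, ha, b, hb, hab⟩ := Submodule.mem_sup.mp (hM y hy)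
  obtain ⟨p, rfl⟩ := Submodule.mem_span_singleton.mp ha
  exact ⟨p, by rwa [← hab, add_sub_cancel_left]⟩

lemma exists_isTowerRetraction {C : PreCplx} (hC : IsCplx C) (ht : HtowerCond C) :
    ∃ x P h M, IsHomog C.gr 0 x ∧ IsTowerRetraction C.d x P h M := by
  obtain ⟨hd, hdd⟩ := hC
  obtain ⟨x, hxc, hxh, hnt, hsp⟩ := ht
  have hdd' : ∀ v, C.d (C.d v) = 0 := LinearMap.congr_fun hdd
  set B := LinearMap.range C.d
  have hinj : ∀ p : R, p • x ∈ B → p = 0 := fun p => eq_zero_of_smul_mem_range hd hxh hnt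
  obtain ⟨σ, hσ⟩ := exists_section_range C.d
  -- a projection with kernel the cycles
  let τ := σ ∘ₗ C.d.rangeRestrict
  have hdτ : ∀ v, C.d (τ v) = C.d v := fun v => hσ _
  have hτ_cycle : ∀ v, C.d v = 0 → τ v = 0 := fun v hv => by
    simp [τ, show C.d.rangeRestrict v = 0 from Subtype.ext hv]
  obtain ⟨M, hM⟩ := exists_pow_smul_sub_smul_mem_range hsp
  let L : V C.n →ₗ[R] V C.n := (Uu ^ M) • (LinearMap.id - τ)
  obtain ⟨P, hP⟩ := exists_linearMap_sub_smul_mem B hinj L fun v => hM _ (by simp [hdτ])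
  have hP_eq : ∀ v p, L v - p • x ∈ B → P v = p := fun v p hp =>
    sub_eq_zero.mp (hinj _ (by simpa [sub_smul] using B.sub_mem hp (hP v)))
  have hP_d : ∀ v, P (C.d v) = 0 := fun v => hP_eq _ _ <| by
    simpa [L, hτ_cycle _ (hdd' v)] using B.smul_mem (Uu ^ M) ⟨v, rfl⟩
  have hP_x : P x = Uu ^ M := hP_eq _ _ (by simp [L, hτ_cycle x hxc])
  let K := L - LinearMap.toSpanSingleton R _ x ∘ₗ P
  let h := σ ∘ₗ K.codRestrict B hP
  refine ⟨x, P, h, M, hxh, hxc, hP_d, hP_x, fun v => ?_⟩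
  have hdh : C.d (h v) = L v - P v • x := hσ _
  have hhd : h (C.d v) = (Uu ^ M) • τ v := by
    have : K.codRestrict B hP (C.d v) = (Uu ^ M) • C.d.rangeRestrict v :=
      Subtype.ext <| show K (C.d v) = _ by simp [K, L, hτ_cycle _ (hdd' v), hP_d]
    simp [h, this, τ]
  rw [hdh, hhd]
  simp only [L, LinearMap.smul_apply, LinearMap.sub_apply, LinearMap.id_apply]
  module

lemma IsTowerRetraction.tensor {m n : ℕ} {d₁ h₁ : V m →ₗ[R] V m} {x₁ : V m}
    {P₁ : V m →ₗ[R] R} {M₁ : ℕ} {d₂ h₂ : V n →ₗ[R] V n} {x₂ : V n} {P₂ : V n →ₗ[R] R} {M₂ : ℕ}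
    (hr₁ : IsTowerRetraction d₁ x₁ P₁ h₁ M₁) (hr₂ : IsTowerRetraction d₂ x₂ P₂ h₂ M₂) :
    IsTowerRetraction (dTensor d₁ d₂) (tvec x₁ x₂) (tfun P₁ P₂)
      ((Uu ^ M₂) • tmap h₁ LinearMap.id + tmap (LinearMap.toSpanSingleton R _ x₁ ∘ₗ P₁) h₂)
      (M₁ + M₂) := by
  set hT := (Uu ^ M₂) • tmap h₁ LinearMap.id + tmap (LinearMap.toSpanSingleton R _ x₁ ∘ₗ P₁) h₂
  refine ⟨by simp [dTensor_tvec, hr₁.d_x, hr₂.d_x], fun z => ?_, ?_, fun z => ?_⟩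
  · show (tfun P₁ P₂ ∘ₗ dTensor d₁ d₂) z = (0 : V (m * n) →ₗ[R] R) z
    congr 1
    exact linearMap_ext_tvec fun i j => by simp [dTensor_tvec, tfun_tvec, hr₁.P_d, hr₂.P_d]
  · rw [tfun_tvec, hr₁.P_x, hr₂.P_x, pow_add]
  · let lhs := dTensor d₁ d₂ ∘ₗ hT + hT ∘ₗ dTensor d₁ d₂
    let rhs := (Uu ^ (M₁ + M₂)) • LinearMap.id -
      LinearMap.toSpanSingleton R _ (tvec x₁ x₂) ∘ₗ tfun P₁ P₂
    suffices lhs = rhs from LinearMap.congr_fun this z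
    refine linearMap_ext_tvec fun i j => ?_
    have f₁ := eq_sub_of_add_eq (hr₁.homotopy (e i))
    have f₂ := eq_sub_of_add_eq (hr₂.homotopy (e j))
    simp only [lhs, rhs, hT, LinearMap.add_apply, LinearMap.sub_apply, LinearMap.smul_apply,
      LinearMap.comp_apply, LinearMap.toSpanSingleton_apply, LinearMap.id_apply, map_add,
      map_smul, tmap_tvec, dTensor_tvec, tfun_tvec, hr₁.d_x, hr₁.P_d, f₁, f₂]
    simp only [tvec_sub_left, tvec_sub_right, tvec_smul_left, tvec_smul_right, tvec_zero_left,
      smul_add, smul_sub, zero_smul, smul_zero, add_zero]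
    -- the cross terms `U^{M₂} • h₁ u ⊗ ∂₂ v` occur twice and cancel because `2 = 0`
    match_scalars <;> ring_nf
    simp [CharTwo.two_eq_zero]

lemma isCplx_tensorPre {C₁ C₂ : PreCplx} (h₁ : IsCplx C₁) (h₂ : IsCplx C₂) :
    IsCplx (tensorPre C₁ C₂) :=
  ⟨GradedMap.add (h₁.1.tmap (gradedMap_id C₂.gr) (add_zero _))
    ((gradedMap_id C₁.gr).tmap h₂.1 (zero_add _)), dTensor_comp_self h₁.2 h₂.2⟩

lemma modU_tmap_anticomm_apply {m n : ℕ} {d₁ ι₁ : V m →ₗ[R] V m} {d₂ ι₂ : V n →ₗ[R] V n}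
    (h₁ : ∀ v, modU ((ι₁ ∘ₗ d₁ + d₁ ∘ₗ ι₁) v)) (h₂ : ∀ v, modU ((ι₂ ∘ₗ d₂ + d₂ ∘ₗ ι₂) v))
    (z : V (m * n)) : modU ((tmap ι₁ ι₂ ∘ₗ dTensor d₁ d₂ + dTensor d₁ d₂ ∘ₗ tmap ι₁ ι₂) z) := by
  rw [dTensor_anticomm]
  exact modU_add_apply (modU_tmap_apply_left h₁ _) (modU_tmap_apply_right _ h₂) z

lemma homotopicModU_tmap_sq {C₁ C₂ : PreCplx} {ι₁ : V C₁.n →ₗ[R] V C₁.n}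
    {ι₂ : V C₂.n →ₗ[R] V C₂.n} (hι₂ : GradedMap C₂.gr C₂.gr 0 ι₂)
    (hanti₂ : ∀ v, modU ((ι₂ ∘ₗ C₂.d + C₂.d ∘ₗ ι₂) v))
    (h₁ : HomotopicModU C₁ C₁ (ι₁ ∘ₗ ι₁) LinearMap.id)
    (h₂ : HomotopicModU C₂ C₂ (ι₂ ∘ₗ ι₂) LinearMap.id) :
    HomotopicModU (tensorPre C₁ C₂) (tensorPre C₁ C₂) (tmap ι₁ ι₂ ∘ₗ tmap ι₁ ι₂)
      LinearMap.id := by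
  obtain ⟨H₁, hH₁, hE₁⟩ := h₁
  obtain ⟨H₂, hH₂, hE₂⟩ := h₂
  have hK₂ : ι₂ ∘ₗ ι₂ ∘ₗ C₂.d + C₂.d ∘ₗ ι₂ ∘ₗ ι₂ =
      ι₂ ∘ₗ (ι₂ ∘ₗ C₂.d + C₂.d ∘ₗ ι₂) + (ι₂ ∘ₗ C₂.d + C₂.d ∘ₗ ι₂) ∘ₗ ι₂ := by
    simp only [LinearMap.comp_add, LinearMap.add_comp, LinearMap.comp_assoc]
    abel_nf
    simp only [two_zsmul, linearMap_add_self, add_zero]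
  have hK : ∀ v, modU ((ι₂ ∘ₗ ι₂ ∘ₗ C₂.d + C₂.d ∘ₗ ι₂ ∘ₗ ι₂) v) := by
    rw [hK₂]
    exact modU_add_apply (fun v => modU_map ι₂ (hanti₂ v)) fun v => hanti₂ (ι₂ v)
  have hE := modU_add_apply (modU_add_apply (modU_tmap_apply_left hE₁ (ι₂ ∘ₗ ι₂))
    (modU_tmap_apply_right LinearMap.id hE₂)) (modU_tmap_apply_right H₁ hK)
  rw [← tmap_sq_add_id_add_dTensor_comm] at hE
  exact ⟨_, GradedMap.add (hH₁.tmap (hι₂.comp hι₂) (add_zero _))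
    ((gradedMap_id C₁.gr).tmap hH₂ (zero_add _)), hE⟩

/-- the tensor product of two almost ι-complexes is an almost
ι-complex. -/
theorem tensor_isAICplx (C₁ C₂ : PreAI) (h₁ : IsAICplx C₁) (h₂ : IsAICplx C₂) :
    IsAICplx (tensorAI C₁ C₂) := by
  obtain ⟨hC₁, hι₁, hanti₁, hsq₁, ht₁⟩ := h₁
  obtain ⟨hC₂, hι₂, hanti₂, hsq₂, ht₂⟩ := h₂
  obtain ⟨x₁, P₁, H₁, M₁, hx₁, hr₁⟩ := exists_isTowerRetraction hC₁ ht₁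
  obtain ⟨x₂, P₂, H₂, M₂, hx₂, hr₂⟩ := exists_isTowerRetraction hC₂ ht₂
  exact ⟨isCplx_tensorPre hC₁ hC₂, hι₁.tmap hι₂ (add_zero _),
    modU_tmap_anticomm_apply hanti₁ hanti₂, homotopicModU_tmap_sq hι₂ hanti₂ hsq₁ hsq₂,
    IsTowerRetraction.htowerCond (C := tensorPre C₁.toPreCplx C₂.toPreCplx) (hr₁.tensor hr₂)
      (hx₁.tvec hx₂ (add_zero 0))⟩

end AI
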